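/- Assume in addition that F has non-empty subgradient at two measures ρ⁻ and ρ⁺ with ρ⁻(Ω) < 1 and ρ⁺(Ω) > 1, and that μ is supported on a compact set., the supremum in the dual formulation F_ε(μ) = sup { ∫ φ dμ − F*(−φ^c) : φ c-concave } is attained, i.e. there exists a c-concave maximizer φ. -/

import Mathlib

open MeasureTheory Filter Topology Set
open scoped ENNReal NNReal

noncomputable section

abbrev Euc (d : ℕ) : Type := EuclideanSpace ℝ (Fin d)

/-- the quadratic cost `c(x,y) = ‖x−y‖²/(2ε)` -/
def cost {d : ℕ} (ε : ℝ) (x y : Euc d) : ℝ := ‖x - y‖ ^ 2 / (2 * ε)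

/-- optimal transport cost from `ρ` to `μ` for the cost `c` -/
def Icost {d : ℕ} (c : Euc d → Euc d → ℝ) (ρ μ : Measure (Euc d)) : ℝ≥0∞ :=
  ⨅ (π : Measure (Euc d × Euc d)) (_ : π.map Prod.fst = ρ ∧ π.map Prod.snd = μ),
    ∫⁻ p, ENNReal.ofReal (c p.1 p.2) ∂π

/-- the Moreau envelope `F_ε(μ) = inf_{ρ ∈ P(Ω)} I_c(ρ,μ) + F(ρ)` -/
def moreauC {d : ℕ} (Ω : Set (Euc d)) (F : Measure (Euc d) → ℝ≥0∞)
    (c : Euc d → Euc d → ℝ) (μ : Measure (Euc d)) : ℝ≥0∞ :=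
  ⨅ (ρ : Measure (Euc d)) (_ : IsProbabilityMeasure ρ ∧ ρ Ωᶜ = 0), Icost c ρ μ + F ρ

/-- the `c`-transform `ψ^c = inf_x [c(x,·) − ψ(x)]` -/
def ctrans {d : ℕ} (c : Euc d → Euc d → ℝ) (ψ : Euc d → ℝ) (y : Euc d) : ℝ :=
  ⨅ x : Euc d, (c x y - ψ x)

/-- a function is `c`-concave when it is the `c`-transform of a (bounded continuous)
function -/
def CConcave {d : ℕ} (c : Euc d → Euc d → ℝ) (φ : Euc d → ℝ) : Prop :=
  ∃ ψ : Euc d → ℝ, Continuous ψ ∧ (∃ M : ℝ, ∀ x, |ψ x| ≤ M) ∧ φ = ctrans c ψ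

/-- Legendre transform of `F` in the duality between `M(Ω)` and `C⁰(Ω)`:
`F*(ψ) = sup_ρ [∫ ψ dρ − F(ρ)]`. -/
def legendre {d : ℕ} (Ω : Set (Euc d)) (F : Measure (Euc d) → ℝ≥0∞)
    (ψ : Euc d → ℝ) : EReal :=
  ⨆ (ρ : Measure (Euc d)) (_ : IsFiniteMeasure ρ ∧ ρ Ωᶜ = 0),
    (((∫ x, ψ x ∂ρ : ℝ) : EReal) - ((F ρ : ℝ≥0∞) : EReal))

/-- `φ ∈ ∂F(ρ)`, the subdifferential of `F` at `ρ` for this duality -/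
def InSubdiff {d : ℕ} (Ω : Set (Euc d)) (F : Measure (Euc d) → ℝ≥0∞)
    (ρ : Measure (Euc d)) (φ : Euc d → ℝ) : Prop :=
  ∀ σ : Measure (Euc d), IsFiniteMeasure σ → σ Ωᶜ = 0 →
    ((F ρ : ℝ≥0∞) : EReal) + ((∫ x, φ x ∂σ - ∫ x, φ x ∂ρ : ℝ) : EReal)
      ≤ ((F σ : ℝ≥0∞) : EReal)

/-- `(φ, ψ)` is a pair of Kantorovich potentials for the transport from `μ` to `ρ`
(for the cost `c`): admissible and attaining the optimal cost. -/
def IsKantorovichPair {d : ℕ} (c : Euc d → Euc d → ℝ) (μ ρ : Measure (Euc d))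
    (φ ψ : Euc d → ℝ) : Prop :=
  (∀ x y : Euc d, ψ x + φ y ≤ c x y) ∧
  (((∫ y, φ y ∂μ + ∫ x, ψ x ∂ρ : ℝ) : EReal) = ((Icost c ρ μ : ℝ≥0∞) : EReal))

/-- the value of the dual problem at `φ`: `∫ φ dμ − F*(−φ^c)` -/
def dualVal {d : ℕ} (Ω : Set (Euc d)) (F : Measure (Euc d) → ℝ≥0∞)
    (c : Euc d → Euc d → ℝ) (μ : Measure (Euc d)) (φ : Euc d → ℝ) : EReal :=
  ((∫ x, φ x ∂μ : ℝ) : EReal) - legendre Ω F (fun y => - ctrans c φ y)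

/-!
Let `v = φ^c`. Unless `F ≡ ∞` (when every dual value is `+∞`), `F` is finite at `ρ⁻` and `ρ⁺`,
its subdifferential there being non-empty, and testing `F*` against them bounds every dual value
by `C + b (ρ^±(Ω) - 1) + F(ρ^±)`, where `b = max_Ω v` and `C` bounds the cost on
`Ω × supp μ`. Hence the supremum is finite and, along a maximizing sequence, `b` stays between
two constants. Replacing `φ` by the truncated transform of `v|_Ω`, and `v` by the transform of
that, does not decrease the dual value and produces potentials that are uniformly bounded and
uniformly Lipschitz on `Ω`. By Arzelà–Ascoli a subsequence converges uniformly on `Ω`; since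
`F*` is a supremum of functionals continuous under uniform convergence, the dual value passes
to the limit, and the truncated transform of the limit potential is a maximizer.
-/

section

open Metric

variable {d : ℕ} {ε : ℝ}

lemma cost_nonneg (hε : 0 < ε) (x y : Euc d) : 0 ≤ cost ε x y := by
  unfold cost; positivity

@[simp] lemma cost_self (x : Euc d) : cost ε x x = 0 := by simp [cost]

lemma cost_comm (x y : Euc d) : cost ε x y = cost ε y x := by
  simp [cost, norm_sub_rev]

lemma exists_cost_le {Ω K : Set (Euc d)} (hΩ : IsCompact Ω) (hK : IsCompact K) :
    ∃ C, ∀ z ∈ Ω, ∀ y ∈ K, cost ε z y ≤ C := by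
  obtain ⟨C, hC⟩ := (hΩ.prod hK).bddAbove_image (f := fun p : Euc d × Euc d => cost ε p.1 p.2)
    (by unfold cost; fun_prop)
  exact ⟨C, fun z hz y hy => hC ⟨(z, y), ⟨hz, hy⟩, rfl⟩⟩

lemma cost_le_cost_add (hε : 0 < ε) {a r : ℝ} {x y y' : Euc d} (hx : ‖x‖ ≤ a)
    (hy : ‖y‖ ≤ r) (hy' : ‖y'‖ ≤ r) :
    cost ε x y ≤ cost ε x y' + (a + r) / ε * dist y y' := by
  have hdiff : ‖x - y‖ - ‖x - y'‖ ≤ dist y y' := by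
    simpa [dist_eq_norm, norm_sub_rev y] using norm_sub_norm_le (x - y) (x - y')
  have hsum : ‖x - y‖ + ‖x - y'‖ ≤ 2 * (a + r) := by
    linarith [norm_sub_le x y, norm_sub_le x y']
  have hsq : ‖x - y‖ ^ 2 - ‖x - y'‖ ^ 2 ≤ 2 * (a + r) * dist y y' := by
    nlinarith [norm_nonneg (x - y), norm_nonneg (x - y'), dist_nonneg (x := y) (y := y')]
  unfold cost
  rw [div_mul_eq_mul_div, ← sub_le_iff_le_add', ← sub_div, div_le_div_iff₀ (by positivity) hε]
  nlinarith

lemma bddBelow_range_cost_sub {ι : Type*} (hε : 0 < ε) (p : ι → Euc d) {ψ : ι → ℝ} {M : ℝ}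
    (hψ : ∀ i, ψ i ≤ M) (y : Euc d) : BddBelow (range fun i => cost ε (p i) y - ψ i) :=
  ⟨-M, by rintro _ ⟨i, rfl⟩; linarith [cost_nonneg hε (p i) y, hψ i]⟩

lemma lipschitzOnWith_iInf_cost_sub {ι : Type*} [Nonempty ι] (hε : 0 < ε) {p : ι → Euc d}
    {ψ : ι → ℝ} {a M : ℝ} (hp : ∀ i, ‖p i‖ ≤ a) (hψ : ∀ i, ψ i ≤ M) (r : ℝ) :
    LipschitzOnWith ((a + r) / ε).toNNReal (fun y => ⨅ i, cost ε (p i) y - ψ i)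
      (closedBall 0 r) := by
  refine LipschitzOnWith.of_le_add_mul' _ fun y hy y' hy' => ?_
  rw [mem_closedBall_zero_iff] at hy hy'
  rw [← sub_le_iff_le_add]
  refine le_ciInf fun i => ?_
  linarith [ciInf_le (bddBelow_range_cost_sub hε p hψ y) i, cost_le_cost_add hε (hp i) hy hy']

section CTransform

variable {ψ : Euc d → ℝ} {M : ℝ}

lemma ctrans_le (hε : 0 < ε) (hψ : ∀ x, ψ x ≤ M) (x y : Euc d) :
    ctrans (cost ε) ψ y ≤ cost ε x y - ψ x :=
  ciInf_le (bddBelow_range_cost_sub hε id hψ y) x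

lemma le_ctrans {c : Euc d → Euc d → ℝ} {y : Euc d} {m : ℝ} (h : ∀ x, m ≤ c x y - ψ x) :
    m ≤ ctrans c ψ y :=
  le_ciInf h

lemma add_ctrans_le_cost (hε : 0 < ε) (hψ : ∀ x, ψ x ≤ M) (x y : Euc d) :
    ψ x + ctrans (cost ε) ψ y ≤ cost ε x y := by
  linarith [ctrans_le hε hψ x y]

lemma abs_ctrans_le (hε : 0 < ε) (hψ : ∀ x, |ψ x| ≤ M) (y : Euc d) :
    |ctrans (cost ε) ψ y| ≤ M := by
  have hψ' x := (abs_le.1 (hψ x)).2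
  refine abs_le.2 ⟨le_ctrans fun x => ?_, ?_⟩
  · linarith [cost_nonneg hε x y, hψ' x]
  · linarith [ctrans_le hε hψ' y y, cost_self (ε := ε) y, (abs_le.1 (hψ y)).1]

/-- Minimisers of `x ↦ c(x, y) - ψ x` lie within `√(4εM)` of `y`. -/
lemma ctrans_eq_iInf_closedBall (hε : 0 < ε) (hψ : ∀ x, |ψ x| ≤ M) {r : ℝ} {y : Euc d}
    (hy : ‖y‖ ≤ r) :
    ctrans (cost ε) ψ y =
      ⨅ x : closedBall (0 : Euc d) (r + √(4 * ε * M)), cost ε x y - ψ x := by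
  have hψ' x := (abs_le.1 (hψ x)).2
  have hyball : y ∈ closedBall (0 : Euc d) (r + √(4 * ε * M)) := by
    rw [mem_closedBall_zero_iff]; linarith [Real.sqrt_nonneg (4 * ε * M)]
  have : Nonempty (closedBall (0 : Euc d) (r + √(4 * ε * M))) := ⟨⟨y, hyball⟩⟩
  have hbdd := bddBelow_range_cost_sub hε
    ((↑) : closedBall (0 : Euc d) (r + √(4 * ε * M)) → Euc d) (fun x => hψ' x) y
  refine le_antisymm (le_ciInf fun x => ctrans_le hε hψ' x y) (le_ctrans fun x => ?_)
  by_cases hx : x ∈ closedBall (0 : Euc d) (r + √(4 * ε * M))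
  · exact ciInf_le hbdd ⟨x, hx⟩
  · have hfar : √(4 * ε * M) < ‖x - y‖ := by
      rw [mem_closedBall_zero_iff, not_le] at hx
      linarith [norm_sub_norm_le x y]
    have hM : 0 ≤ M := (abs_nonneg _).trans (hψ 0)
    have hcost : 2 * M < cost ε x y := by
      have hsq : 4 * ε * M < ‖x - y‖ ^ 2 := by
        rwa [Real.sqrt_lt' ((Real.sqrt_nonneg _).trans_lt hfar)] at hfar
      unfold cost
      rw [lt_div_iff₀ (by positivity)]
      linarith
    linarith [ciInf_le hbdd ⟨y, hyball⟩, cost_self (ε := ε) y, hψ' x, (abs_le.1 (hψ y)).1]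

lemma lipschitzOnWith_ctrans (hε : 0 < ε) (hψ : ∀ x, |ψ x| ≤ M) {r : ℝ} (hr : 0 ≤ r) :
    LipschitzOnWith ((r + √(4 * ε * M) + r) / ε).toNNReal (ctrans (cost ε) ψ)
      (closedBall 0 r) := by
  have : Nonempty (closedBall (0 : Euc d) (r + √(4 * ε * M))) :=
    ⟨0, mem_closedBall_self (by positivity)⟩
  have hinf := lipschitzOnWith_iInf_cost_sub hε
    (p := fun x : closedBall (0 : Euc d) (r + √(4 * ε * M)) => (x : Euc d))
    (fun x => mem_closedBall_zero_iff.1 x.2) (fun x => (abs_le.1 (hψ x)).2) r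
  intro y hy y' hy'
  rw [ctrans_eq_iInf_closedBall hε hψ (mem_closedBall_zero_iff.1 hy),
    ctrans_eq_iInf_closedBall hε hψ (mem_closedBall_zero_iff.1 hy')]
  exact hinf hy hy'

end CTransform

lemma locallyLipschitz_of_lipschitzOnWith_closedBall {α β : Type*} [PseudoMetricSpace α]
    [PseudoEMetricSpace β] {f : α → β} (x₀ : α)
    (h : ∀ r, 0 ≤ r → ∃ K, LipschitzOnWith K f (closedBall x₀ r)) : LocallyLipschitz f := by
  intro x
  obtain ⟨K, hK⟩ := h (dist x x₀ + 1) (by positivity)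
  exact ⟨K, _, closedBall_mem_nhds_of_mem (mem_ball.2 (lt_add_one _)), hK⟩

lemma continuous_ctrans (hε : 0 < ε) {ψ : Euc d → ℝ} {M : ℝ} (hψ : ∀ x, |ψ x| ≤ M) :
    Continuous (ctrans (cost ε) ψ) :=
  (locallyLipschitz_of_lipschitzOnWith_closedBall 0 fun _ hr =>
    ⟨_, lipschitzOnWith_ctrans hε hψ hr⟩).continuous

lemma CConcave.exists_abs_le (hε : 0 < ε) {φ : Euc d → ℝ} (hφ : CConcave (cost ε) φ) :
    ∃ M, ∀ y, |φ y| ≤ M := by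
  obtain ⟨ψ, -, ⟨M, hM⟩, rfl⟩ := hφ
  exact ⟨M, abs_ctrans_le hε hM⟩

lemma CConcave.continuous (hε : 0 < ε) {φ : Euc d → ℝ} (hφ : CConcave (cost ε) φ) :
    Continuous φ := by
  obtain ⟨ψ, -, ⟨M, hM⟩, rfl⟩ := hφ
  exact continuous_ctrans hε hM

/-- The `c`-transform of a potential given on `Ω`, truncated at `R`: untruncated it grows
quadratically, whereas `CConcave` asks for a bounded potential. -/
def ctransOn (ε R : ℝ) (Ω : Set (Euc d)) (v : Ω → ℝ) (y : Euc d) : ℝ :=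
  min (⨅ z : Ω, cost ε z y - v z) R

section CTransformOn

variable {Ω : Set (Euc d)} {R B : ℝ} {v : Ω → ℝ}

lemma ctransOn_le_cost_sub (hε : 0 < ε) (hv : ∀ z, v z ≤ B) (z : Ω) (y : Euc d) :
    ctransOn ε R Ω v y ≤ cost ε z y - v z :=
  (min_le_left _ _).trans
    (ciInf_le (bddBelow_range_cost_sub hε (fun z : Ω => (z : Euc d)) hv y) z)

lemma ctransOn_le (y : Euc d) : ctransOn ε R Ω v y ≤ R := min_le_right _ _

lemma le_ctransOn [Nonempty Ω] {m : ℝ} {y : Euc d} (h : ∀ z : Ω, m ≤ cost ε z y - v z)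
    (hR : m ≤ R) : m ≤ ctransOn ε R Ω v y :=
  le_min (le_ciInf h) hR

lemma abs_ctransOn_le [Nonempty Ω] (hε : 0 < ε) (hv : ∀ z, v z ≤ B) (hR : 0 ≤ R)
    (y : Euc d) : |ctransOn ε R Ω v y| ≤ max B R := by
  refine abs_le.2 ⟨le_ctransOn (fun z => ?_) ?_, (ctransOn_le y).trans (le_max_right _ _)⟩
  · linarith [cost_nonneg hε z y, hv z, le_max_left B R]
  · linarith [le_max_right B R]

lemma ctransOn_le_add [Nonempty Ω] (hε : 0 < ε) {w : Ω → ℝ} {δ : ℝ} (hδ : 0 ≤ δ)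
    (hv : ∀ z, v z ≤ B) (hvw : ∀ z, w z ≤ v z + δ) (y : Euc d) :
    ctransOn ε R Ω v y ≤ ctransOn ε R Ω w y + δ := by
  rw [← sub_le_iff_le_add]
  refine le_ctransOn (fun z => ?_) (by linarith [ctransOn_le (ε := ε) (R := R) (v := v) y])
  linarith [ctransOn_le_cost_sub (R := R) hε hv z y, hvw z]

lemma lipschitzOnWith_ctransOn [Nonempty Ω] (hε : 0 < ε) {RΩ : ℝ}
    (hΩ : Ω ⊆ closedBall 0 RΩ) (hv : ∀ z, v z ≤ B) (r : ℝ) :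
    LipschitzOnWith ((RΩ + r) / ε).toNNReal (ctransOn ε R Ω v) (closedBall 0 r) := by
  have hinf := lipschitzOnWith_iInf_cost_sub hε (p := fun z : Ω => (z : Euc d))
    (fun z => mem_closedBall_zero_iff.1 (hΩ z.2)) hv r
  exact lipschitzOnWith_iff_restrict.2 (hinf.to_restrict.min_const R)

lemma continuous_ctransOn [Nonempty Ω] (hε : 0 < ε) {RΩ : ℝ} (hΩ : Ω ⊆ closedBall 0 RΩ)
    (hv : ∀ z, v z ≤ B) : Continuous (ctransOn ε R Ω v) :=
  (locallyLipschitz_of_lipschitzOnWith_closedBall 0 fun r _ =>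
    ⟨_, lipschitzOnWith_ctransOn hε hΩ hv r⟩).continuous

lemma le_ctrans_ctransOn (hε : 0 < ε) (hv : ∀ z, v z ≤ B) (z : Ω) :
    v z ≤ ctrans (cost ε) (ctransOn ε R Ω v) z :=
  le_ctrans fun x => by
    linarith [ctransOn_le_cost_sub (R := R) hε hv z x, cost_comm (ε := ε) x z]

lemma ctransOn_le_ctransOn_ctrans [Nonempty Ω] (hε : 0 < ε) (y : Euc d) :
    ctransOn ε R Ω v y ≤
      ctransOn ε R Ω (Ω.domRestrict (ctrans (cost ε) (ctransOn ε R Ω v))) y :=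
  le_ctransOn (fun z => by
    rw [Set.domRestrict_apply]
    linarith [ctrans_le hε (ctransOn_le (ε := ε) (R := R) (v := v)) y z, cost_comm (ε := ε) y z])
    (ctransOn_le y)

lemma cConcave_ctransOn [Nonempty Ω] (hε : 0 < ε) (hv : ∀ z, v z ≤ B) (hR : 0 ≤ R) :
    CConcave (cost ε) (ctransOn ε R Ω v) := by
  have hb := abs_ctransOn_le hε hv hR
  set w := ctrans (cost ε) (ctransOn ε R Ω v)
  refine ⟨w, continuous_ctrans hε hb, ⟨_, abs_ctrans_le hε hb⟩, funext fun y => ?_⟩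
  refine le_antisymm (le_ctrans fun x => ?_) (le_min (le_ciInf fun z => ?_) ?_)
  · linarith [ctrans_le hε (ctransOn_le (ε := ε) (R := R) (v := v)) y x, cost_comm (ε := ε) x y]
  · linarith [ctrans_le hε (fun x => (abs_le.1 (abs_ctrans_le hε hb x)).2) z y,
      le_ctrans_ctransOn (R := R) hε hv z]
  · have hwR : -R ≤ w y := le_ctrans fun x => by
      linarith [cost_nonneg hε x y, ctransOn_le (ε := ε) (R := R) (v := v) x]
    linarith [ctrans_le hε (fun x => (abs_le.1 (abs_ctrans_le hε hb x)).2) y y,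
      cost_self (ε := ε) y]

end CTransformOn

lemma Continuous.integrable_of_abs_le {α : Type*} [TopologicalSpace α] [MeasurableSpace α]
    [OpensMeasurableSpace α] {f : α → ℝ} (hf : Continuous f) {M : ℝ} (h : ∀ x, |f x| ≤ M)
    (σ : Measure α) [IsFiniteMeasure σ] : Integrable f σ :=
  Integrable.of_bound hf.aestronglyMeasurable M (ae_of_all _ h)

lemma integral_le_integral_add_of_le_add {α : Type*} [MeasurableSpace α] {σ : Measure α}
    [IsFiniteMeasure σ] {s : Set α} (hs : σ sᶜ = 0) {f g : α → ℝ} (hf : Integrable f σ)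
    (hg : Integrable g σ) {δ : ℝ} (h : ∀ x ∈ s, f x ≤ g x + δ) :
    ∫ x, f x ∂σ ≤ ∫ x, g x ∂σ + δ * σ.real univ := by
  have := integral_mono_ae hf (hg.add (integrable_const δ))
    (by filter_upwards [mem_ae_iff.2 hs] using h)
  simp only [Pi.add_apply] at this
  rwa [integral_add hg (integrable_const δ), integral_const, smul_eq_mul, mul_comm] at this

section Legendre

variable {Ω : Set (Euc d)} {F : Measure (Euc d) → ℝ≥0∞}

lemma le_legendre (ψ : Euc d → ℝ) {σ : Measure (Euc d)} [IsFiniteMeasure σ] (hσ : σ Ωᶜ = 0)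
    (hFσ : F σ ≠ ⊤) : ((∫ x, ψ x ∂σ - (F σ).toReal : ℝ) : EReal) ≤ legendre Ω F ψ := by
  rw [EReal.coe_sub, EReal.coe_ennreal_toReal hFσ]
  exact le_iSup₂ (f := fun ρ (_ : IsFiniteMeasure ρ ∧ ρ Ωᶜ = 0) =>
    ((∫ x, ψ x ∂ρ : ℝ) : EReal) - ((F ρ : ℝ≥0∞) : EReal)) σ ⟨‹_›, hσ⟩

lemma legendre_le {ψ : Euc d → ℝ} {a : EReal}
    (h : ∀ σ : Measure (Euc d), IsFiniteMeasure σ → σ Ωᶜ = 0 → F σ ≠ ⊤ →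
      ((∫ x, ψ x ∂σ - (F σ).toReal : ℝ) : EReal) ≤ a) :
    legendre Ω F ψ ≤ a := by
  refine iSup₂_le fun σ ⟨hσ, hσΩ⟩ => ?_
  rcases eq_or_ne (F σ) ⊤ with hF | hF
  · simp [hF]
  · rw [← EReal.coe_ennreal_toReal hF, ← EReal.coe_sub]
    exact h σ hσ hσΩ hF

lemma legendre_eq_bot (h : ∀ σ : Measure (Euc d), IsFiniteMeasure σ → σ Ωᶜ = 0 → F σ = ⊤)
    (ψ : Euc d → ℝ) : legendre Ω F ψ = ⊥ :=
  le_bot_iff.1 (legendre_le fun σ hσ hσΩ hF => (hF (h σ hσ hσΩ)).elim)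

lemma legendre_mono {ψ₁ ψ₂ : Euc d → ℝ} {M₁ M₂ : ℝ} (hc₁ : Continuous ψ₁)
    (hb₁ : ∀ x, |ψ₁ x| ≤ M₁) (hc₂ : Continuous ψ₂) (hb₂ : ∀ x, |ψ₂ x| ≤ M₂)
    (h : ∀ x ∈ Ω, ψ₁ x ≤ ψ₂ x) : legendre Ω F ψ₁ ≤ legendre Ω F ψ₂ := by
  refine legendre_le fun σ _ hσ hF => le_trans ?_ (le_legendre ψ₂ hσ hF)
  have := integral_le_integral_add_of_le_add hσ (hc₁.integrable_of_abs_le hb₁ σ)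
    (hc₂.integrable_of_abs_le hb₂ σ) (δ := 0) (by simpa using h)
  exact EReal.coe_le_coe_iff.2 (by linarith)

lemma InSubdiff.ne_top {ρ σ : Measure (Euc d)} {φ : Euc d → ℝ} (h : InSubdiff Ω F ρ φ)
    [IsFiniteMeasure σ] (hσ : σ Ωᶜ = 0) (hFσ : F σ ≠ ⊤) : F ρ ≠ ⊤ := by
  intro htop
  have := h σ ‹_› hσ
  rw [htop, EReal.coe_ennreal_top, EReal.top_add_coe, top_le_iff,
    EReal.coe_ennreal_eq_top_iff] at this
  exact hFσ this

end Legendre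

/-- The dual value with `ctransOn u` in place of `φ` and `u` in place of `φ^c`; it depends on
`u` only through its values on `Ω`. -/
def dualValOn (ε R : ℝ) (Ω : Set (Euc d)) (F : Measure (Euc d) → ℝ≥0∞) (μ : Measure (Euc d))
    (u : Euc d → ℝ) : EReal :=
  ((∫ y, ctransOn ε R Ω (Ω.domRestrict u) y ∂μ : ℝ) : EReal) - legendre Ω F (fun x => -u x)

section DualValue

variable {Ω K : Set (Euc d)} {F : Measure (Euc d) → ℝ≥0∞} {μ : Measure (Euc d)} {C : ℝ}
  {φ : Euc d → ℝ}

lemma CConcave.exists_isMaxOn_ctrans [Nonempty Ω] (hε : 0 < ε) (hΩ : IsCompact Ω)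
    (hφ : CConcave (cost ε) φ) : ∃ z ∈ Ω, IsMaxOn (ctrans (cost ε) φ) Ω z :=
  have ⟨_, hM⟩ := hφ.exists_abs_le hε
  hΩ.exists_isMaxOn .of_subtype (continuous_ctrans hε hM).continuousOn

lemma dualVal_le_of_isMaxOn (hε : 0 < ε) (hC : ∀ z ∈ Ω, ∀ y ∈ K, cost ε z y ≤ C)
    [IsProbabilityMeasure μ] (hμK : μ Kᶜ = 0) (hφ : CConcave (cost ε) φ) {z : Euc d}
    (hz : z ∈ Ω) (hmax : IsMaxOn (ctrans (cost ε) φ) Ω z) {ρ : Measure (Euc d)}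
    [IsFiniteMeasure ρ] (hρ : ρ Ωᶜ = 0) (hFρ : F ρ ≠ ⊤) :
    dualVal Ω F (cost ε) μ φ ≤
      ((C + ctrans (cost ε) φ z * (ρ.real univ - 1) + (F ρ).toReal : ℝ) : EReal) := by
  obtain ⟨M, hM⟩ := hφ.exists_abs_le hε
  set v := ctrans (cost ε) φ
  have hφμ : ∫ y, φ y ∂μ ≤ C - v z := by
    have := integral_le_integral_add_of_le_add hμK ((hφ.continuous hε).integrable_of_abs_le hM μ)
      (integrable_const (0 : ℝ)) (δ := C - v z) fun y hy => by
        linarith [add_ctrans_le_cost hε (fun x => (abs_le.1 (hM x)).2) y z,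
          cost_comm (ε := ε) y z, hC z hz y hy]
    simpa using this
  have hvρ : ∫ x, v x ∂ρ ≤ v z * ρ.real univ := by
    have := integral_le_integral_add_of_le_add hρ
      ((continuous_ctrans hε hM).integrable_of_abs_le (abs_ctrans_le hε hM) ρ)
      (integrable_const (0 : ℝ)) (δ := v z) fun x hx => by simpa using hmax hx
    simpa using this
  calc dualVal Ω F (cost ε) μ φ
      ≤ ((C - v z : ℝ) : EReal) - ((∫ x, -v x ∂ρ - (F ρ).toReal : ℝ) : EReal) :=
        EReal.sub_le_sub (EReal.coe_le_coe_iff.2 hφμ) (le_legendre _ hρ hFρ)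
    _ ≤ _ := by
      rw [← EReal.coe_sub, EReal.coe_le_coe_iff, integral_neg]
      linarith

variable {ρm ρp : Measure (Euc d)} [IsFiniteMeasure ρm] [IsFiniteMeasure ρp]

lemma dualVal_le_max [Nonempty Ω] (hε : 0 < ε) (hΩ : IsCompact Ω)
    (hC : ∀ z ∈ Ω, ∀ y ∈ K, cost ε z y ≤ C) [IsProbabilityMeasure μ] (hμK : μ Kᶜ = 0)
    (hρm : ρm Ωᶜ = 0) (hFm : F ρm ≠ ⊤) (hm : ρm.real univ ≤ 1)
    (hρp : ρp Ωᶜ = 0) (hFp : F ρp ≠ ⊤) (hp : 1 ≤ ρp.real univ) (hφ : CConcave (cost ε) φ) :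
    dualVal Ω F (cost ε) μ φ ≤ ((C + max (F ρm).toReal (F ρp).toReal : ℝ) : EReal) := by
  obtain ⟨z, hz, hmax⟩ := hφ.exists_isMaxOn_ctrans hε hΩ
  rcases le_total 0 (ctrans (cost ε) φ z) with hb | hb
  · refine (dualVal_le_of_isMaxOn hε hC hμK hφ hz hmax hρm hFm).trans
      (EReal.coe_le_coe_iff.2 ?_)
    nlinarith [le_max_left (F ρm).toReal (F ρp).toReal]
  · refine (dualVal_le_of_isMaxOn hε hC hμK hφ hz hmax hρp hFp).trans
      (EReal.coe_le_coe_iff.2 ?_)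
    nlinarith [le_max_right (F ρm).toReal (F ρp).toReal]

lemma ctrans_mem_Ioo_of_lt_dualVal (hε : 0 < ε) (hC : ∀ z ∈ Ω, ∀ y ∈ K, cost ε z y ≤ C)
    [IsProbabilityMeasure μ] (hμK : μ Kᶜ = 0)
    (hρm : ρm Ωᶜ = 0) (hFm : F ρm ≠ ⊤) (hm : ρm.real univ < 1)
    (hρp : ρp Ωᶜ = 0) (hFp : F ρp ≠ ⊤) (hp : 1 < ρp.real univ) (hφ : CConcave (cost ε) φ)
    {z : Euc d} (hz : z ∈ Ω) (hmax : IsMaxOn (ctrans (cost ε) φ) Ω z) {s : ℝ}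
    (hs : ((s - 1 : ℝ) : EReal) < dualVal Ω F (cost ε) μ φ) :
    ctrans (cost ε) φ z ∈ Ioo ((s - 1 - C - (F ρp).toReal) / (ρp.real univ - 1))
      ((C + (F ρm).toReal - s + 1) / (1 - ρm.real univ)) := by
  have hbm := EReal.coe_lt_coe_iff.1 (hs.trans_le
    (dualVal_le_of_isMaxOn hε hC hμK hφ hz hmax hρm hFm))
  have hbp := EReal.coe_lt_coe_iff.1 (hs.trans_le
    (dualVal_le_of_isMaxOn hε hC hμK hφ hz hmax hρp hFp))
  constructor
  · rw [div_lt_iff₀ (by linarith)]; linarith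
  · rw [lt_div_iff₀ (by linarith)]; linarith

lemma dualVal_le_dualValOn [Nonempty Ω] (hε : 0 < ε) {RΩ : ℝ} (hΩR : Ω ⊆ closedBall 0 RΩ)
    [IsProbabilityMeasure μ] (hμK : μ Kᶜ = 0) (hφ : CConcave (cost ε) φ) {R B : ℝ}
    (hR : 0 ≤ R) (hφK : ∀ y ∈ K, φ y ≤ R) (hvB : ∀ z ∈ Ω, ctrans (cost ε) φ z ≤ B) :
    dualVal Ω F (cost ε) μ φ ≤ dualValOn ε R Ω F μ
      (ctrans (cost ε) (ctransOn ε R Ω (Ω.domRestrict (ctrans (cost ε) φ)))) := by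
  obtain ⟨M, hM⟩ := hφ.exists_abs_le hε
  set v := ctrans (cost ε) φ
  have hvB' : ∀ z : Ω, Ω.domRestrict v z ≤ B := fun z => hvB z z.2
  set ψ := ctransOn ε R Ω (Ω.domRestrict v)
  have hψ := abs_ctransOn_le hε hvB' hR
  set u := ctrans (cost ε) ψ
  have hu := abs_ctrans_le hε hψ
  have huB : ∀ z : Ω, Ω.domRestrict u z ≤ max B R := fun z => (abs_le.1 (hu z)).2
  have hφψ : ∀ y ∈ K, φ y ≤ ctransOn ε R Ω (Ω.domRestrict u) y := fun y hy => by
    refine (le_ctransOn (fun z => ?_) (hφK y hy)).trans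
      (by simpa using ctransOn_le_ctransOn_ctrans hε y)
    rw [Set.domRestrict_apply]
    linarith [add_ctrans_le_cost hε (fun x => (abs_le.1 (hM x)).2) y z, cost_comm (ε := ε) y z]
  have hint := integral_le_integral_add_of_le_add hμK
    ((hφ.continuous hε).integrable_of_abs_le hM μ)
    ((continuous_ctransOn hε hΩR huB).integrable_of_abs_le (abs_ctransOn_le hε huB hR) μ)
    (δ := 0) (by simpa using hφψ)
  refine EReal.sub_le_sub (EReal.coe_le_coe_iff.2 (by simpa using hint))
    (legendre_mono (continuous_ctrans hε hψ).neg (fun x => by rw [abs_neg]; exact hu x)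
      (continuous_ctrans hε hM).neg (fun x => by rw [abs_neg]; exact abs_ctrans_le hε hM x)
      fun x hx => neg_le_neg (le_ctrans_ctransOn hε hvB' ⟨x, hx⟩))

lemma exists_maximizing_potentials [Nonempty Ω] (hε : 0 < ε) (hΩ : IsCompact Ω) {RΩ : ℝ}
    (hΩR : Ω ⊆ closedBall 0 RΩ) (hC : ∀ z ∈ Ω, ∀ y ∈ K, cost ε z y ≤ C)
    [IsProbabilityMeasure μ] (hμK : μ Kᶜ = 0)
    (hρm : ρm Ωᶜ = 0) (hFm : F ρm ≠ ⊤) (hm : ρm.real univ < 1)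
    (hρp : ρp Ωᶜ = 0) (hFp : F ρp ≠ ⊤) (hp : 1 < ρp.real univ) {s : ℝ}
    (hs : ⨆ (ψ : Euc d → ℝ) (_ : CConcave (cost ε) ψ), dualVal Ω F (cost ε) μ ψ = s) :
    ∃ R B : ℝ, ∃ Λ : ℝ≥0, ∃ u : ℕ → Euc d → ℝ, 0 ≤ R ∧ (∀ n, Continuous (u n)) ∧
      (∀ n x, |u n x| ≤ B) ∧ (∀ n, LipschitzWith Λ (Ω.domRestrict (u n))) ∧
      ∀ δ > 0, ∀ᶠ n in atTop, ((s - δ : ℝ) : EReal) < dualValOn ε R Ω F μ (u n) := by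
  set b₀ := (s - 1 - C - (F ρp).toReal) / (ρp.real univ - 1)
  set b₁ := (C + (F ρm).toReal - s + 1) / (1 - ρm.real univ)
  set R := max (C - b₀) 0
  set B := max b₁ R
  have hRΩ : 0 ≤ RΩ := (norm_nonneg _).trans
    (mem_closedBall_zero_iff.1 (hΩR (Nonempty.some ‹Nonempty Ω›).2))
  have key : ∀ n : ℕ, ∃ u : Euc d → ℝ, Continuous u ∧ (∀ x, |u x| ≤ B) ∧
      LipschitzWith ((RΩ + √(4 * ε * B) + RΩ) / ε).toNNReal (Ω.domRestrict u) ∧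
      ((s - 1 / (n + 1) : ℝ) : EReal) < dualValOn ε R Ω F μ u := by
    intro n
    have hn : 0 < 1 / ((n : ℝ) + 1) := Nat.one_div_pos_of_nat
    have hn' : 1 / ((n : ℝ) + 1) ≤ 1 := by
      rw [div_le_one (by positivity)]; linarith [n.cast_nonneg (α := ℝ)]
    obtain ⟨φ, hφ, hlt⟩ : ∃ φ, CConcave (cost ε) φ ∧
        ((s - 1 / (n + 1) : ℝ) : EReal) < dualVal Ω F (cost ε) μ φ := by
      have : ((s - 1 / (n + 1) : ℝ) : EReal) < s := EReal.coe_lt_coe_iff.2 (by linarith)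
      rw [← hs] at this
      simpa only [lt_iSup_iff, exists_prop] using this
    obtain ⟨z, hz, hmax⟩ := hφ.exists_isMaxOn_ctrans hε hΩ
    obtain ⟨M, hM⟩ := hφ.exists_abs_le hε
    have hb := ctrans_mem_Ioo_of_lt_dualVal hε hC hμK hρm hFm hm hρp hFp hp hφ hz hmax
      ((EReal.coe_le_coe_iff.2 (by linarith : s - 1 ≤ s - 1 / ((n : ℝ) + 1))).trans_lt hlt)
    have hvB : ∀ x ∈ Ω, ctrans (cost ε) φ x ≤ b₁ := fun x hx => (hmax hx).trans hb.2.le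
    have hψ := abs_ctransOn_le (R := R) hε (fun x : Ω => hvB x x.2) (le_max_right _ _)
    refine ⟨_, continuous_ctrans hε hψ, abs_ctrans_le hε hψ,
      ((lipschitzOnWith_ctrans hε hψ hRΩ).mono hΩR).to_restrict,
      hlt.trans_le (dualVal_le_dualValOn hε hΩR hμK hφ (le_max_right _ _) (fun y hy => ?_) hvB)⟩
    linarith [add_ctrans_le_cost hε (fun x => (abs_le.1 (hM x)).2) y z, cost_comm (ε := ε) y z,
      hC z hz y hy, hb.1, le_max_left (C - b₀) 0]
  choose u hu_cont hu_bdd hu_lip hu_val using key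
  refine ⟨R, B, _, u, le_max_right _ _, hu_cont, hu_bdd, hu_lip, fun δ hδ => ?_⟩
  filter_upwards [tendsto_one_div_add_atTop_nhds_zero_nat.eventually (gt_mem_nhds hδ)] with n hn
  exact (EReal.coe_lt_coe_iff.2 (by linarith)).trans (hu_val n)

end DualValue

lemma exists_tendstoUniformly_subseq_of_lipschitzWith {α : Type*} [PseudoMetricSpace α]
    [CompactSpace α] {f : ℕ → α → ℝ} {K : ℝ≥0} {B : ℝ} (hf : ∀ n, LipschitzWith K (f n))
    (hB : ∀ n x, |f n x| ≤ B) :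
    ∃ g : α → ℝ, (∀ x, |g x| ≤ B) ∧
      ∃ κ : ℕ → ℕ, StrictMono κ ∧ TendstoUniformly (fun n => f (κ n)) g atTop := by
  set f' : ℕ → BoundedContinuousFunction α ℝ := fun n => .mkOfCompact ⟨f n, (hf n).continuous⟩
  have hequi : Equicontinuous ((↑) : range f' → α → ℝ) :=
    (LipschitzWith.uniformEquicontinuous _ K (by rintro ⟨_, n, rfl⟩; exact hf n)).equicontinuous
  have hcpt := BoundedContinuousFunction.arzela_ascoli (Icc (-B) B) isCompact_Icc _
    (by rintro _ x ⟨n, rfl⟩; exact abs_le.1 (hB n x)) hequi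
  obtain ⟨g, -, κ, hκ, hlim⟩ := hcpt.isSeqCompact fun n => subset_closure (mem_range_self n)
  have hunif := BoundedContinuousFunction.tendsto_iff_tendstoUniformly.1 hlim
  exact ⟨g, fun x => le_of_tendsto' (hunif.tendsto_at x).abs fun n => hB (κ n) x, κ, hκ, hunif⟩

lemma le_dualVal_ctransOn_of_tendstoUniformly {Ω : Set (Euc d)} [Nonempty Ω]
    {F : Measure (Euc d) → ℝ≥0∞} {μ : Measure (Euc d)} [IsProbabilityMeasure μ] (hε : 0 < ε)
    {RΩ R B s : ℝ} (hΩR : Ω ⊆ closedBall 0 RΩ) (hR : 0 ≤ R) {u : ℕ → Euc d → ℝ} {g : Ω → ℝ}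
    (hu : ∀ n, Continuous (u n)) (huB : ∀ n x, |u n x| ≤ B) (hgB : ∀ z, |g z| ≤ B)
    (hlim : TendstoUniformly (fun n => Ω.domRestrict (u n)) g atTop)
    (hs : ∀ δ > 0, ∀ᶠ n in atTop, ((s - δ : ℝ) : EReal) < dualValOn ε R Ω F μ (u n)) :
    (s : EReal) ≤ dualVal Ω F (cost ε) μ (ctransOn ε R Ω g) := by
  have hgB' z := (abs_le.1 (hgB z)).2
  set φ := ctransOn ε R Ω g
  have hφ := abs_ctransOn_le hε hgB' hR
  set w := ctrans (cost ε) φ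
  have hw := abs_ctrans_le hε hφ
  suffices hL : legendre Ω F (fun x => -w x) ≤ ((∫ y, φ y ∂μ - s : ℝ) : EReal) by
    calc (s : EReal) = ((∫ y, φ y ∂μ : ℝ) : EReal) - ((∫ y, φ y ∂μ - s : ℝ) : EReal) := by
          rw [← EReal.coe_sub, sub_sub_cancel]
      _ ≤ _ := EReal.sub_le_sub le_rfl hL
  refine legendre_le fun σ _ hσ hF => EReal.coe_le_coe_iff.2 ?_
  rw [integral_neg]
  refine le_of_forall_pos_le_add fun η hη => ?_
  set m := σ.real univ
  set δ := η / (2 + m)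
  have hδ : 0 < δ := by positivity
  obtain ⟨n, hclose, hval⟩ := ((Metric.tendstoUniformly_iff.1 hlim δ hδ).and (hs δ hδ)).exists
  have hclose' z : |g z - u n z| < δ := by simpa [Real.dist_eq] using hclose z
  have hun : -∫ x, u n x ∂σ - (F σ).toReal <
      ∫ y, ctransOn ε R Ω (Ω.domRestrict (u n)) y ∂μ - (s - δ) := by
    have := hval.trans_le (EReal.sub_le_sub le_rfl (le_legendre (fun x => -u n x) hσ hF))
    rw [← EReal.coe_sub, EReal.coe_lt_coe_iff, integral_neg] at this
    linarith
  have hμ : ∫ y, ctransOn ε R Ω (Ω.domRestrict (u n)) y ∂μ ≤ ∫ y, φ y ∂μ + δ * μ.real univ :=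
    integral_le_integral_add_of_le_add (s := univ) (by simp)
    ((continuous_ctransOn hε hΩR fun z => (abs_le.1 (huB n z)).2).integrable_of_abs_le
      (abs_ctransOn_le hε (fun z => (abs_le.1 (huB n z)).2) hR) μ)
    ((continuous_ctransOn hε hΩR hgB').integrable_of_abs_le hφ μ)
    fun y _ => ctransOn_le_add hε hδ.le (fun z => (abs_le.1 (huB n z)).2)
      (fun z => by linarith [(abs_lt.1 (hclose' z)).2]) y
  have hσ' := integral_le_integral_add_of_le_add (δ := δ) hσ
    ((hu n).integrable_of_abs_le (huB n) σ)
    ((continuous_ctrans hε hφ).integrable_of_abs_le hw σ) fun x hx => by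
      linarith [(abs_lt.1 (hclose' ⟨x, hx⟩)).1, le_ctrans_ctransOn (R := R) hε hgB' ⟨x, hx⟩]
  have hδη : δ * (2 + m) = η := div_mul_cancel₀ _ (by positivity)
  rw [probReal_univ, mul_one] at hμ
  linarith

lemma exists_cConcave_dualVal_eq_iSup_of_ne_bot {Ω K : Set (Euc d)} [Nonempty Ω]
    {F : Measure (Euc d) → ℝ≥0∞} {μ : Measure (Euc d)} [IsProbabilityMeasure μ]
    {ρm ρp : Measure (Euc d)} [IsFiniteMeasure ρm] [IsFiniteMeasure ρp] (hε : 0 < ε)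
    (hΩ : IsCompact Ω) (hK : IsCompact K) (hμK : μ Kᶜ = 0)
    (hρm : ρm Ωᶜ = 0) (hFm : F ρm ≠ ⊤) (hm : ρm.real univ < 1)
    (hρp : ρp Ωᶜ = 0) (hFp : F ρp ≠ ⊤) (hp : 1 < ρp.real univ)
    (hs : ⨆ (ψ : Euc d → ℝ) (_ : CConcave (cost ε) ψ), dualVal Ω F (cost ε) μ ψ ≠ ⊥) :
    ∃ φ : Euc d → ℝ, CConcave (cost ε) φ ∧
      dualVal Ω F (cost ε) μ φ
        = ⨆ (ψ : Euc d → ℝ) (_ : CConcave (cost ε) ψ), dualVal Ω F (cost ε) μ ψ := by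
  obtain ⟨C, hC⟩ := exists_cost_le (ε := ε) hΩ hK
  obtain ⟨RΩ, hΩR⟩ := hΩ.isBounded.subset_closedBall 0
  have hs_top : ⨆ (ψ : Euc d → ℝ) (_ : CConcave (cost ε) ψ), dualVal Ω F (cost ε) μ ψ ≠ ⊤ :=
    ne_top_of_le_ne_top (EReal.coe_ne_top _)
      (iSup₂_le fun φ hφ => dualVal_le_max hε hΩ hC hμK hρm hFm hm.le hρp hFp hp.le hφ)
  obtain ⟨R, B, Λ, u, hR, hu_cont, hu_bdd, hu_lip, hu_val⟩ :=
    exists_maximizing_potentials hε hΩ hΩR hC hμK hρm hFm hm hρp hFp hp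
      (EReal.coe_toReal hs_top hs).symm
  have := isCompact_iff_compactSpace.1 hΩ
  obtain ⟨g, hgB, κ, hκ, hlim⟩ :=
    exists_tendstoUniformly_subseq_of_lipschitzWith hu_lip fun n z => hu_bdd n z
  have hφ := cConcave_ctransOn hε (fun z => (abs_le.1 (hgB z)).2) hR
  refine ⟨_, hφ, le_antisymm (le_iSup₂_of_le _ hφ le_rfl) ?_⟩
  rw [← EReal.coe_toReal hs_top hs]
  exact le_dualVal_ctransOn_of_tendstoUniformly hε hΩR hR (fun n => hu_cont (κ n))
    (fun n => hu_bdd (κ n)) hgB hlim fun δ hδ => hκ.tendsto_atTop.eventually (hu_val δ hδ)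

end

theorem moreau_dual_attained_general
    (d : ℕ) (ε : ℝ) (hε : 0 < ε)
    (Ω : Set (Euc d)) (hΩc : IsCompact Ω) (hΩne : Ω.Nonempty)
    (F : Measure (Euc d) → ℝ≥0∞)
    -- `F` has non-empty subgradient at `ρ⁻` and `ρ⁺`, with `ρ⁻(Ω) < 1 < ρ⁺(Ω)`
    (ρminus ρplus : Measure (Euc d))
    (hminus : IsFiniteMeasure ρminus ∧ ρminus Ωᶜ = 0 ∧ ρminus Set.univ < 1 ∧
      ∃ φm : Euc d → ℝ, Continuous φm ∧ InSubdiff Ω F ρminus φm)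
    (hplus : IsFiniteMeasure ρplus ∧ ρplus Ωᶜ = 0 ∧ 1 < ρplus Set.univ ∧
      ∃ φp : Euc d → ℝ, Continuous φp ∧ InSubdiff Ω F ρplus φp)
    -- `μ` is supported on a compact set
    (μ : Measure (Euc d)) (hμ : IsProbabilityMeasure μ)
    (hμcpt : ∃ K : Set (Euc d), IsCompact K ∧ μ Kᶜ = 0) :
    ∃ φ : Euc d → ℝ, CConcave (cost ε) φ ∧
      dualVal Ω F (cost ε) μ φ
        = ⨆ (ψ : Euc d → ℝ) (_ : CConcave (cost ε) ψ), dualVal Ω F (cost ε) μ ψ := by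
  have := hΩne.to_subtype
  set s := ⨆ (ψ : Euc d → ℝ) (_ : CConcave (cost ε) ψ), dualVal Ω F (cost ε) μ ψ
  have hattained φ (hφ : CConcave (cost ε) φ) (hle : s ≤ dualVal Ω F (cost ε) μ φ) :
      ∃ φ, CConcave (cost ε) φ ∧ dualVal Ω F (cost ε) μ φ = s :=
    ⟨φ, hφ, le_antisymm (le_iSup₂_of_le φ hφ le_rfl) hle⟩
  have hφ₀ : CConcave (cost ε) (ctrans (cost ε) fun _ : Euc d => 0) :=
    ⟨_, continuous_const, ⟨0, by simp⟩, rfl⟩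
  by_cases hdeg : ∀ σ : Measure (Euc d), IsFiniteMeasure σ → σ Ωᶜ = 0 → F σ = ⊤
  · refine hattained _ hφ₀ ?_
    rw [dualVal, legendre_eq_bot hdeg, EReal.coe_sub_bot]
    exact le_top
  rcases eq_bot_or_bot_lt s with hs | hs
  · exact hattained _ hφ₀ (hs ▸ bot_le)
  push Not at hdeg
  obtain ⟨σ, hσ, hσΩ, hFσ⟩ := hdeg
  obtain ⟨hmfin, hmΩ, hm, φm, -, hmsub⟩ := hminus
  obtain ⟨hpfin, hpΩ, hp, φp, -, hpsub⟩ := hplus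
  obtain ⟨K, hK, hμK⟩ := hμcpt
  exact exists_cConcave_dualVal_eq_iSup_of_ne_bot hε hΩc hK hμK
    hmΩ (hmsub.ne_top hσΩ hFσ)
    (by simpa [Measure.real] using ENNReal.toReal_strict_mono ENNReal.one_ne_top hm)
    hpΩ (hpsub.ne_top hσΩ hFσ)
    (by simpa [Measure.real] using ENNReal.toReal_strict_mono (measure_ne_top _ _) hp) hs.ne'

/-- **existence of a dual maximizer.** If, in addition, `F` has non-empty
subgradient at two measures `ρ⁻` and `ρ⁺` with `ρ⁻(Ω) < 1 < ρ⁺(Ω)`, and `μ` is supported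
on a compact set, then the supremum in the dual formulation
`F_ε(μ) = sup {∫ φ dμ − F*(−φ^c) : φ c-concave}` is attained. -/
theorem moreau_dual_attained
    (d : ℕ) (ε : ℝ) (hε : 0 < ε)
    (Ω : Set (Euc d)) (hΩc : IsCompact Ω) (hΩmeas : MeasurableSet Ω) (hΩne : Ω.Nonempty)
    (F : Measure (Euc d) → ℝ≥0∞)
    (hFconv : ∀ ρ σ : Measure (Euc d), ∀ a b : ℝ≥0∞, a + b = 1 →
      F (a • ρ + b • σ) ≤ a * F ρ + b * F σ)
    (hFlsc : ∀ (ρ : ℕ → Measure (Euc d)) (σ : Measure (Euc d)),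
      (∀ n, IsFiniteMeasure (ρ n)) → IsFiniteMeasure σ →
      (∀ f : BoundedContinuousFunction (Euc d) ℝ,
        Tendsto (fun n => ∫ x, f x ∂(ρ n)) atTop (𝓝 (∫ x, f x ∂σ))) →
      F σ ≤ liminf (fun n => F (ρ n)) atTop)
    (hFsupp : ∀ ρ : Measure (Euc d), F ρ ≠ ⊤ → ρ Ωᶜ = 0)
    -- `F` has non-empty subgradient at `ρ⁻` and `ρ⁺`, with `ρ⁻(Ω) < 1 < ρ⁺(Ω)`
    (ρminus ρplus : Measure (Euc d))
    (hminus : IsFiniteMeasure ρminus ∧ ρminus Ωᶜ = 0 ∧ ρminus Set.univ < 1 ∧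
      ∃ φm : Euc d → ℝ, Continuous φm ∧ InSubdiff Ω F ρminus φm)
    (hplus : IsFiniteMeasure ρplus ∧ ρplus Ωᶜ = 0 ∧ 1 < ρplus Set.univ ∧
      ∃ φp : Euc d → ℝ, Continuous φp ∧ InSubdiff Ω F ρplus φp)
    -- `μ` is supported on a compact set
    (μ : Measure (Euc d)) (hμ : IsProbabilityMeasure μ)
    (hμcpt : ∃ K : Set (Euc d), IsCompact K ∧ μ Kᶜ = 0) :
    ∃ φ : Euc d → ℝ, CConcave (cost ε) φ ∧
      dualVal Ω F (cost ε) μ φ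
        = ⨆ (ψ : Euc d → ℝ) (_ : CConcave (cost ε) ψ), dualVal Ω F (cost ε) μ ψ :=
  moreau_dual_attained_general d ε hε Ω hΩc hΩne F ρminus ρplus hminus hplus μ hμ hμcpt

end
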